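/- Let (X,R,μ) and (Y,R',ν) be probability spaces over K and let Φ : (R,μ) → (R',ν) be a measure algebra isomorphism. Then the induced map on step functions is an isometry for the seminorms ‖f‖_μ = sup_{x∈X} |f(x)|·N_μ(x) and ‖g‖_ν = sup_{y∈Y} |g(y)|·N_ν(y): for any pairwise disjoint A₁,…,A_m ∈ R and any scalars α₁,…,α_m ∈ K, sup_{y∈Y} |Σ_{i=1}^m αᵢ·χ_{Φ(Aᵢ)}(y)|·N_ν(y) = sup_{x∈X} |Σ_{i=1}^m αᵢ·χ_{Aᵢ}(x)|·N_μ(x), where χ_A denotes the indicator function of A. -/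

import Mathlib

open scoped Classical

/-- A covering ring of subsets of `X`: it covers `X` and is closed under
intersections, unions and differences. -/
def IsCoveringRing {X : Type*} (R : Set (Set X)) : Prop :=
  (∀ x : X, ∃ A ∈ R, x ∈ A) ∧
    ∀ A ∈ R, ∀ B ∈ R, A ∩ B ∈ R ∧ A ∪ B ∈ R ∧ A \ B ∈ R

/-- `R` is separating: distinct points can be separated by a member of `R`. -/
def Separating {X : Type*} (R : Set (Set X)) : Prop :=
  ∀ x y : X, x ≠ y → ∃ A ∈ R, x ∈ A ∧ y ∉ A

/-- A shrinking collection: the intersection of any two members contains a member. -/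
def Shrinking {X : Type*} (𝒜 : Set (Set X)) : Prop :=
  ∀ A ∈ 𝒜, ∀ B ∈ 𝒜, ∃ C ∈ 𝒜, C ⊆ A ∩ B

/-- A `K`-valued measure on a covering ring `R`: additive, bounded and continuous. -/
structure IsKMeasure {X : Type*} {K : Type*} [NormedField K]
    (R : Set (Set X)) (μ : Set X → K) : Prop where
  additive : ∀ A ∈ R, ∀ B ∈ R, Disjoint A B → μ (A ∪ B) = μ A + μ B
  bounded : ∀ A ∈ R, ∃ M : ℝ, ∀ B ∈ R, B ⊆ A → ‖μ B‖ ≤ M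
  cont : ∀ 𝒜 ⊆ R, Shrinking 𝒜 → ⋂₀ 𝒜 = ∅ →
    ∀ ε : ℝ, 0 < ε → ∃ A₀ ∈ 𝒜, ∀ A ∈ 𝒜, A ⊆ A₀ → ‖μ A‖ < ε

/-- `‖A‖_μ = sup {|μ B| : B ∈ R, B ⊆ A}`. -/
noncomputable def setNorm {X K : Type*} [NormedField K]
    (R : Set (Set X)) (μ : Set X → K) (A : Set X) : ℝ :=
  sSup {r : ℝ | ∃ B ∈ R, B ⊆ A ∧ r = ‖μ B‖}

/-- `N_μ(x) = inf {‖A‖_μ : A ∈ R, x ∈ A}`. -/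
noncomputable def normFun {X K : Type*} [NormedField K]
    (R : Set (Set X)) (μ : Set X → K) (x : X) : ℝ :=
  sInf {r : ℝ | ∃ A ∈ R, x ∈ A ∧ r = setNorm R μ A}

/-- `‖f‖_μ = sup_{x ∈ X} |f x| ⬝ N_μ(x)`. -/
noncomputable def fNorm {X K : Type*} [NormedField K]
    (R : Set (Set X)) (μ : Set X → K) (f : X → K) : ℝ :=
  sSup {r : ℝ | ∃ x : X, r = ‖f x‖ * normFun R μ x}

/-- A probability space: `R` is a covering algebra and `μ(X) = 1`. -/
def IsProbSpace {X K : Type*} [NormedField K] (R : Set (Set X)) (μ : Set X → K) : Prop :=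
  IsCoveringRing R ∧ Set.univ ∈ R ∧ IsKMeasure R μ ∧ μ Set.univ = 1

/-- A measure algebra isomorphism `(R,μ) → (R',ν)`. -/
def IsMeasAlgIso {X Y K : Type*} [NormedField K] (R : Set (Set X)) (μ : Set X → K)
    (R' : Set (Set Y)) (ν : Set Y → K) (Φ : Set X → Set Y) : Prop :=
  Set.BijOn Φ R R' ∧
    (∀ A ∈ R, ∀ B ∈ R, Φ (A ∪ B) = Φ A ∪ Φ B) ∧
    (∀ A ∈ R, Φ (Set.univ \ A) = Set.univ \ Φ A) ∧
    (∀ A ∈ R, ν (Φ A) = μ A)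

/-- An invertible measure preserving transformation of `(X,R,μ)`. -/
def IsInvMPT {X K : Type*} [NormedField K] (R : Set (Set X)) (μ : Set X → K)
    (T : X → X) : Prop :=
  Function.Bijective T ∧
    (∀ A ∈ R, T '' A ∈ R) ∧ (∀ A ∈ R, T ⁻¹' A ∈ R) ∧
    (∀ A ∈ R, μ (T '' A) = μ A) ∧ (∀ A ∈ R, μ (T ⁻¹' A) = μ A)

/-- A finite partition of `X` by pairwise disjoint nonempty members of `R`. -/
def IsFinPartition {X : Type*} (R : Set (Set X)) (α : Finset (Set X)) : Prop :=
  (∀ A ∈ α, A ∈ R) ∧ (∀ A ∈ α, A ≠ ∅) ∧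
    (∀ A ∈ α, ∀ B ∈ α, A ≠ B → Disjoint A B) ∧
    ⋃₀ (α : Set (Set X)) = Set.univ

/-- The join `α ∨ β` of two partitions, discarding empty intersections. -/
noncomputable def pJoin {X : Type*} (α β : Finset (Set X)) : Finset (Set X) :=
  (Finset.image₂ (fun A B => A ∩ B) α β).filter (fun C => C ≠ ∅)

/-- `M(α)`: the number of members of `α` of positive norm. -/
noncomputable def Mcard {X K : Type*} [NormedField K] (R : Set (Set X)) (μ : Set X → K)
    (α : Finset (Set X)) : ℕ :=
  (α.filter (fun A => 0 < setNorm R μ A)).card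

/-- `H_μ(α) = (min {‖A‖_μ : A ∈ α, ‖A‖_μ > 0}) * log₂ M(α)` (and `0` if `M(α) = 0`,
since `sInf ∅ = 0` and `log₂ 0 = 0` in Mathlib). -/
noncomputable def Hent {X K : Type*} [NormedField K] (R : Set (Set X)) (μ : Set X → K)
    (α : Finset (Set X)) : ℝ :=
  sInf {r : ℝ | ∃ A ∈ α, 0 < setNorm R μ A ∧ r = setNorm R μ A} *
    Real.logb 2 (Mcard R μ α)

/-- `joinSeq T α n = α ∨ T⁻¹α ∨ ⋯ ∨ T^{-n}α`. -/
noncomputable def joinSeq {X : Type*} (T : X → X) (α : Finset (Set X)) : ℕ → Finset (Set X)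
  | 0 => α
  | n + 1 => pJoin (joinSeq T α n) (α.image (fun A => T^[n + 1] ⁻¹' A))

/-- `h_μ(T,α) = lim_{n→∞} H_μ(α ∨ T⁻¹α ∨ ⋯ ∨ T^{-(n-1)}α)/n`. -/
noncomputable def hMeasPart {X K : Type*} [NormedField K] (R : Set (Set X)) (μ : Set X → K)
    (T : X → X) (α : Finset (Set X)) : ℝ :=
  Filter.limUnder Filter.atTop (fun n : ℕ => Hent R μ (joinSeq T α n) / (n + 1))

/-- `h_μ(T) = sup_α h_μ(T,α)` over finite partitions `α` of `X` relative to `R`. -/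
noncomputable def hMeas {X K : Type*} [NormedField K] (R : Set (Set X)) (μ : Set X → K)
    (T : X → X) : ℝ :=
  sSup {r : ℝ | ∃ α : Finset (Set X), IsFinPartition R α ∧ r = hMeasPart R μ T α}

/-- The partition `α(𝒰)` associated to a finite cover `𝒰`: nonempty sets of the form
`A₁ ∩ ⋯ ∩ A_k` where each `Aᵢ` is `Uᵢ` or `X ∖ Uᵢ`. -/
noncomputable def coverPart {X : Type*} (𝒰 : Finset (Set X)) : Finset (Set X) :=
  ((𝒰.powerset).image fun S => (⋂ U ∈ S, U) ∩ ⋂ U ∈ 𝒰 \ S, (Set.univ \ U)).filter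
    (fun C => C ≠ ∅)

/-- The join `𝒰 ∨ 𝒲` of two covers. -/
noncomputable def cJoin {X : Type*} (𝒰 𝒲 : Finset (Set X)) : Finset (Set X) :=
  Finset.image₂ (fun U W => U ∩ W) 𝒰 𝒲

/-- `N(𝒰)`: the least cardinality of a subcover of `𝒰`. -/
noncomputable def coverN {X : Type*} (𝒰 : Finset (Set X)) : ℕ :=
  sInf {n : ℕ | ∃ 𝒱 : Finset (Set X), 𝒱 ⊆ 𝒰 ∧ ⋃₀ (𝒱 : Set (Set X)) = Set.univ ∧ 𝒱.card = n}

/-- `H_top(𝒰) = log₂ N(𝒰)`. -/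
noncomputable def Htop {X : Type*} (𝒰 : Finset (Set X)) : ℝ :=
  Real.logb 2 (coverN 𝒰)

/-- `cJoinSeq T 𝒰 n = 𝒰 ∨ T⁻¹𝒰 ∨ ⋯ ∨ T^{-n}𝒰`. -/
noncomputable def cJoinSeq {X : Type*} (T : X → X) (𝒰 : Finset (Set X)) : ℕ → Finset (Set X)
  | 0 => 𝒰
  | n + 1 => cJoin (cJoinSeq T 𝒰 n) (𝒰.image (fun U => T^[n + 1] ⁻¹' U))

/-- `h_top(T,𝒰) = lim_{n→∞} H_top(𝒰 ∨ T⁻¹𝒰 ∨ ⋯ ∨ T^{-(n-1)}𝒰)/n`. -/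
noncomputable def hTopCov {X : Type*} (T : X → X) (𝒰 : Finset (Set X)) : ℝ :=
  Filter.limUnder Filter.atTop (fun n : ℕ => Htop (cJoinSeq T 𝒰 n) / (n + 1))

/-- `h_top(T) = sup_𝒰 h_top(T,𝒰)` over finite open covers `𝒰` of `X` for the
topology `t`. -/
noncomputable def hTop {X : Type*} (t : TopologicalSpace X) (T : X → X) : ℝ :=
  sSup {r : ℝ | ∃ 𝒰 : Finset (Set X), (∀ U ∈ 𝒰, t.IsOpen U) ∧
    ⋃₀ (𝒰 : Set (Set X)) = Set.univ ∧ r = hTopCov T 𝒰}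

/-!
For pairwise disjoint `Aᵢ ∈ R` the seminorm of `∑ αᵢ χ_{Aᵢ}` is `maxᵢ |αᵢ| ‖Aᵢ‖_μ`. The
inequality `≥` rests on `‖A‖_μ ≤ sup_{x ∈ A} N_μ(x)`: given `B ⊆ A` in `R` and, for each
`x ∈ B`, a set `Cₓ ∋ x` of norm `< t + ε`, the sets `B ∖ (C_{x₁} ∪ ⋯ ∪ C_{xₖ})` form a
shrinking family with empty intersection, so by continuity one of them has measure `< ε`, and
the ultrametric inequality bounds `|μ(B)|` by `t + ε`. A measure algebra isomorphism preserves
inclusion, disjointness and the measure, hence `‖Aᵢ‖`, hence the maximum.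
-/

open Set Function MeasureTheory

lemma IsCoveringRing.isSetRing {X : Type*} {R : Set (Set X)} (hR : IsCoveringRing R)
    {A : Set X} (hA : A ∈ R) : IsSetRing R where
  empty_mem := by simpa using (hR.2 A hA A hA).2.2
  union_mem _ _ hs ht := (hR.2 _ hs _ ht).2.1
  sdiff_mem _ _ hs ht := (hR.2 _ hs _ ht).2.2

lemma sum_indicator_const_apply_of_mem {ι X M : Type*} [Fintype ι] [AddCommMonoid M]
    {A : ι → Set X} (hdisj : Pairwise (Disjoint on A)) (c : ι → M) {i : ι} {x : X}
    (hx : x ∈ A i) : ∑ j, (A j).indicator (fun _ => c j) x = c i := by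
  rw [Finset.sum_eq_single i (fun j _ hji => indicator_of_notMem
      (disjoint_left.1 (hdisj hji.symm) hx) _) (by simp), indicator_of_mem hx]

section Seminorms

variable {X K : Type*} [NormedField K] {R : Set (Set X)} {μ : Set X → K}

lemma setNorm_nonneg (A : Set X) : 0 ≤ setNorm R μ A :=
  Real.sSup_nonneg (by rintro _ ⟨B, -, -, rfl⟩; exact norm_nonneg _)

lemma setNorm_le {A : Set X} (hA : A ∈ R) {t : ℝ} (h : ∀ B ∈ R, B ⊆ A → ‖μ B‖ ≤ t) :
    setNorm R μ A ≤ t := by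
  refine csSup_le ⟨_, A, hA, subset_rfl, rfl⟩ ?_
  rintro _ ⟨B, hB, hBA, rfl⟩
  exact h B hB hBA

lemma normFun_nonneg (x : X) : 0 ≤ normFun R μ x :=
  Real.sInf_nonneg (by rintro _ ⟨A, -, -, rfl⟩; exact setNorm_nonneg A)

lemma normFun_le_setNorm {A : Set X} (hA : A ∈ R) {x : X} (hx : x ∈ A) :
    normFun R μ x ≤ setNorm R μ A := by
  refine csInf_le ⟨0, ?_⟩ ⟨A, hA, hx, rfl⟩
  rintro _ ⟨B, -, -, rfl⟩
  exact setNorm_nonneg B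

lemma exists_mem_setNorm_lt_of_normFun_lt {A : Set X} (hA : A ∈ R) {x : X} (hx : x ∈ A)
    {s : ℝ} (hs : normFun R μ x < s) : ∃ C ∈ R, x ∈ C ∧ setNorm R μ C < s := by
  obtain ⟨_, ⟨C, hC, hxC, rfl⟩, hCs⟩ :=
    exists_lt_of_csInf_lt (s := {r | ∃ A ∈ R, x ∈ A ∧ r = setNorm R μ A}) ⟨_, A, hA, hx, rfl⟩ hs
  exact ⟨C, hC, hxC, hCs⟩

lemma fNorm_nonneg (f : X → K) : 0 ≤ fNorm R μ f :=
  Real.sSup_nonneg (by rintro _ ⟨x, rfl⟩; exact mul_nonneg (norm_nonneg _) (normFun_nonneg x))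

end Seminorms

namespace IsKMeasure

variable {X K : Type*} [NormedField K] {R : Set (Set X)} {μ : Set X → K}

lemma map_empty (hμ : IsKMeasure R μ) (hR : IsSetRing R) : μ ∅ = 0 := by
  simpa using hμ.additive ∅ hR.empty_mem ∅ hR.empty_mem (disjoint_empty _)

lemma eq_add_inter_sdiff (hμ : IsKMeasure R μ) (hR : IsSetRing R) {B C : Set X}
    (hB : B ∈ R) (hC : C ∈ R) : μ B = μ (B ∩ C) + μ (B \ C) := by
  rw [← hμ.additive _ (hR.inter_mem hB hC) _ (hR.sdiff_mem hB hC)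
    disjoint_sdiff_inter.symm, inter_union_sdiff]

lemma norm_le_setNorm (hμ : IsKMeasure R μ) {A B : Set X} (hA : A ∈ R) (hB : B ∈ R)
    (hBA : B ⊆ A) : ‖μ B‖ ≤ setNorm R μ A := by
  obtain ⟨M, hM⟩ := hμ.bounded A hA
  exact le_csSup ⟨M, by rintro _ ⟨D, hD, hDA, rfl⟩; exact hM D hD hDA⟩ ⟨B, hB, hBA, rfl⟩

lemma exists_norm_sdiff_biUnion_lt (hμ : IsKMeasure R μ) (hR : IsSetRing R) {ι : Type*}
    {B : Set X} (hB : B ∈ R) {C : ι → Set X} (hC : ∀ i, C i ∈ R) (hBC : B ⊆ ⋃ i, C i)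
    {ε : ℝ} (hε : 0 < ε) : ∃ F : Finset ι, ‖μ (B \ ⋃ i ∈ F, C i)‖ < ε := by
  classical
  set 𝒜 := range fun F : Finset ι => B \ ⋃ i ∈ F, C i
  have h𝒜R : 𝒜 ⊆ R := by
    rintro _ ⟨F, rfl⟩
    exact hR.sdiff_mem hB (hR.biUnion_mem F fun i _ => hC i)
  have h𝒜 : Shrinking 𝒜 := by
    rintro _ ⟨F, rfl⟩ _ ⟨G, rfl⟩
    refine ⟨_, ⟨F ∪ G, rfl⟩, ?_⟩
    dsimp only
    rw [Finset.set_biUnion_union, ← sdiff_inter_sdiff]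
  have h𝒜_empty : ⋂₀ 𝒜 = ∅ := by
    refine eq_empty_of_forall_notMem fun x hx => ?_
    obtain ⟨i, hi⟩ := mem_iUnion.1 (hBC (hx _ ⟨∅, rfl⟩).1)
    exact (hx _ ⟨{i}, rfl⟩).2 (by simpa using hi)
  obtain ⟨_, ⟨F, rfl⟩, hF⟩ := hμ.cont 𝒜 h𝒜R h𝒜 h𝒜_empty ε hε
  exact ⟨F, hF _ ⟨F, rfl⟩ subset_rfl⟩

variable (hna : IsNonarchimedean (norm : K → ℝ))
include hna

lemma setNorm_union_le (hμ : IsKMeasure R μ) (hR : IsSetRing R) {C D : Set X}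
    (hC : C ∈ R) (hD : D ∈ R) {s : ℝ} (hCs : setNorm R μ C ≤ s) (hDs : setNorm R μ D ≤ s) :
    setNorm R μ (C ∪ D) ≤ s := by
  refine setNorm_le (hR.union_mem hC hD) fun B hB hBCD => ?_
  rw [hμ.eq_add_inter_sdiff hR hB hC]
  refine (hna _ _).trans (max_le ?_ ?_)
  · exact (hμ.norm_le_setNorm hC (hR.inter_mem hB hC) inter_subset_right).trans hCs
  · refine (hμ.norm_le_setNorm hD (hR.sdiff_mem hB hC) ?_).trans hDs
    rwa [sdiff_subset_iff]

lemma setNorm_biUnion_le (hμ : IsKMeasure R μ) (hR : IsSetRing R) {ι : Type*} (F : Finset ι)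
    {C : ι → Set X} (hC : ∀ i ∈ F, C i ∈ R) {s : ℝ} (hs : 0 ≤ s)
    (hCs : ∀ i ∈ F, setNorm R μ (C i) ≤ s) : setNorm R μ (⋃ i ∈ F, C i) ≤ s := by
  classical
  induction F using Finset.induction_on with
  | empty =>
    refine setNorm_le (by simpa using hR.empty_mem) fun B _ hB => ?_
    have hB : B = ∅ := by simpa using hB
    rwa [hB, hμ.map_empty hR, norm_zero]
  | insert i F _ ih =>
    rw [Finset.set_biUnion_insert]
    simp only [Finset.mem_insert, forall_eq_or_imp] at hC hCs
    exact hμ.setNorm_union_le hna hR hC.1 (hR.biUnion_mem F hC.2) hCs.1 (ih hC.2 hCs.2)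

lemma setNorm_le_of_forall_normFun_le (hμ : IsKMeasure R μ) (hR : IsSetRing R) {A : Set X}
    (hA : A ∈ R) {t : ℝ} (ht : 0 ≤ t) (hN : ∀ x ∈ A, normFun R μ x ≤ t) :
    setNorm R μ A ≤ t := by
  refine setNorm_le hA fun B hB hBA => le_of_forall_pos_le_add fun ε hε => ?_
  have hC : ∀ x : B, ∃ C ∈ R, x.1 ∈ C ∧ setNorm R μ C < t + ε := fun x =>
    exists_mem_setNorm_lt_of_normFun_lt hA (hBA x.2) ((hN x (hBA x.2)).trans_lt (by linarith))
  choose C hCR hxC hCt using hC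
  obtain ⟨F, hF⟩ := hμ.exists_norm_sdiff_biUnion_lt hR hB hCR
    (fun x hx => mem_iUnion.2 ⟨⟨x, hx⟩, hxC _⟩) hε
  set U := ⋃ i ∈ F, C i
  have hU : U ∈ R := hR.biUnion_mem F fun i _ => hCR i
  have hUt : setNorm R μ U ≤ t + ε :=
    hμ.setNorm_biUnion_le hna hR F (fun i _ => hCR i) (by linarith) fun i _ => (hCt i).le
  calc ‖μ B‖ = ‖μ (B ∩ U) + μ (B \ U)‖ := by rw [← hμ.eq_add_inter_sdiff hR hB hU]
    _ ≤ max ‖μ (B ∩ U)‖ ‖μ (B \ U)‖ := hna _ _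
    _ ≤ t + ε := max_le
      ((hμ.norm_le_setNorm hU (hR.inter_mem hB hU) inter_subset_right).trans hUt)
      (by linarith)

/-- For `ι` empty both sides are `0`, the right one by `Real.iSup_of_isEmpty`. -/
theorem fNorm_sum_indicator (hμ : IsKMeasure R μ) (hR : IsSetRing R) {ι : Type*} [Fintype ι]
    {A : ι → Set X} (hA : ∀ i, A i ∈ R) (hdisj : Pairwise (Disjoint on A)) (c : ι → K) :
    fNorm R μ (fun x => ∑ i, (A i).indicator (fun _ => c i) x) =
      ⨆ i, ‖c i‖ * setNorm R μ (A i) := by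
  set f : X → K := fun x => ∑ i, (A i).indicator (fun _ => c i) x
  set M := ⨆ i, ‖c i‖ * setNorm R μ (A i)
  have hf : ∀ i, ∀ x ∈ A i, f x = c i := fun i x hx =>
    sum_indicator_const_apply_of_mem hdisj c hx
  have hM : ∀ i, ‖c i‖ * setNorm R μ (A i) ≤ M := le_ciSup (finite_range _).bddAbove
  have hM0 : 0 ≤ M := Real.iSup_nonneg fun i => mul_nonneg (norm_nonneg _) (setNorm_nonneg _)
  have hfM : ∀ x, ‖f x‖ * normFun R μ x ≤ M := by
    intro x
    by_cases hx : ∃ i, x ∈ A i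
    · obtain ⟨i, hx⟩ := hx
      rw [hf i x hx]
      exact (mul_le_mul_of_nonneg_left (normFun_le_setNorm (hA i) hx) (norm_nonneg _)).trans
        (hM i)
    · have hf0 : f x = 0 := Finset.sum_eq_zero fun i _ =>
        indicator_of_notMem (fun h => hx ⟨i, h⟩) _
      rwa [hf0, norm_zero, zero_mul]
  have hbdd : BddAbove {r | ∃ x, r = ‖f x‖ * normFun R μ x} :=
    ⟨M, by rintro _ ⟨x, rfl⟩; exact hfM x⟩
  refine le_antisymm (Real.sSup_le (by rintro _ ⟨x, rfl⟩; exact hfM x) hM0)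
    (Real.iSup_le (fun i => ?_) (fNorm_nonneg f))
  rcases eq_or_ne (c i) 0 with hc | hc
  · rw [hc, norm_zero, zero_mul]
    exact fNorm_nonneg f
  · have hc' : 0 < ‖c i‖ := norm_pos_iff.2 hc
    rw [← le_div_iff₀' hc']
    refine hμ.setNorm_le_of_forall_normFun_le hna hR (hA i)
      (div_nonneg (fNorm_nonneg f) hc'.le) fun x hx => ?_
    rw [le_div_iff₀' hc', ← hf i x hx]
    exact le_csSup hbdd ⟨x, rfl⟩

end IsKMeasure

namespace IsMeasAlgIso

variable {X Y K : Type*} [NormedField K] {R : Set (Set X)} {μ : Set X → K}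
  {R' : Set (Set Y)} {ν : Set Y → K} {Φ : Set X → Set Y}

lemma map_subset_map_iff (hΦ : IsMeasAlgIso R μ R' ν Φ) (hR : IsSetRing R) {B D : Set X}
    (hB : B ∈ R) (hD : D ∈ R) : Φ B ⊆ Φ D ↔ B ⊆ D := by
  rw [← union_eq_right, ← union_eq_right, ← hΦ.2.1 B hB D hD]
  exact hΦ.1.injOn.eq_iff (hR.union_mem hB hD) hD

lemma disjoint (hΦ : IsMeasAlgIso R μ R' ν Φ) (hR : IsSetRing R) (huniv : univ ∈ R)
    {B D : Set X} (hB : B ∈ R) (hD : D ∈ R) (hBD : Disjoint B D) : Disjoint (Φ B) (Φ D) := by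
  have hsub : Φ B ⊆ Φ (univ \ D) :=
    (hΦ.map_subset_map_iff hR hB (hR.sdiff_mem huniv hD)).2 (subset_sdiff.2 ⟨subset_univ B, hBD⟩)
  rw [hΦ.2.2.1 D hD] at hsub
  exact (subset_sdiff.1 hsub).2

lemma setNorm_map (hΦ : IsMeasAlgIso R μ R' ν Φ) (hR : IsSetRing R) {B : Set X}
    (hB : B ∈ R) : setNorm R' ν (Φ B) = setNorm R μ B := by
  unfold setNorm
  congr 1
  ext r
  constructor
  · rintro ⟨_, hD', hD'B, rfl⟩
    obtain ⟨D, hD, rfl⟩ := hΦ.1.2.2 hD'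
    exact ⟨D, hD, (hΦ.map_subset_map_iff hR hD hB).1 hD'B, by rw [hΦ.2.2.2 D hD]⟩
  · rintro ⟨D, hD, hDB, rfl⟩
    exact ⟨Φ D, hΦ.1.1 hD, (hΦ.map_subset_map_iff hR hD hB).2 hDB, by rw [hΦ.2.2.2 D hD]⟩

end IsMeasAlgIso

theorem stmt11_general {X Y K : Type*} [NontriviallyNormedField K]
    (hna : IsNonarchimedean (norm : K → ℝ))
    (R : Set (Set X)) (μ : Set X → K) (hXp : IsProbSpace R μ)
    (R' : Set (Set Y)) (ν : Set Y → K) (hYp : IsProbSpace R' ν)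
    (Φ : Set X → Set Y) (hΦ : IsMeasAlgIso R μ R' ν Φ)
    (m : ℕ) (A : Fin m → Set X) (hA : ∀ i, A i ∈ R)
    (hdisj : ∀ i j : Fin m, i ≠ j → Disjoint (A i) (A j)) (c : Fin m → K) :
    fNorm R' ν (fun y => ∑ i, Set.indicator (Φ (A i)) (fun _ => c i) y) =
      fNorm R μ (fun x => ∑ i, Set.indicator (A i) (fun _ => c i) x) := by
  obtain ⟨hXR, hXuniv, hμ, -⟩ := hXp
  obtain ⟨hYR, hYuniv, hν, -⟩ := hYp
  have hR := hXR.isSetRing hXuniv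
  have hΦdisj : Pairwise (Disjoint on fun i => Φ (A i)) := fun i j hij =>
    hΦ.disjoint hR hXuniv (hA i) (hA j) (hdisj i j hij)
  rw [hν.fNorm_sum_indicator hna (hYR.isSetRing hYuniv) (fun i => hΦ.1.1 (hA i)) hΦdisj,
    hμ.fNorm_sum_indicator hna hR hA hdisj]
  exact iSup_congr fun i => by rw [hΦ.setNorm_map hR (hA i)]

/-- The map induced by a measure algebra isomorphism on step functions is
an isometry for the seminorms `‖·‖_μ` and `‖·‖_ν`. -/
theorem stmt11 {X Y K : Type*} [NontriviallyNormedField K] [CompleteSpace K]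
    (hna : IsNonarchimedean (norm : K → ℝ))
    (R : Set (Set X)) (μ : Set X → K) (hXp : IsProbSpace R μ)
    (R' : Set (Set Y)) (ν : Set Y → K) (hYp : IsProbSpace R' ν)
    (Φ : Set X → Set Y) (hΦ : IsMeasAlgIso R μ R' ν Φ)
    (m : ℕ) (A : Fin m → Set X) (hA : ∀ i, A i ∈ R)
    (hdisj : ∀ i j : Fin m, i ≠ j → Disjoint (A i) (A j)) (c : Fin m → K) :
    fNorm R' ν (fun y => ∑ i, Set.indicator (Φ (A i)) (fun _ => c i) y) =
      fNorm R μ (fun x => ∑ i, Set.indicator (A i) (fun _ => c i) x) :=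
  stmt11_general hna R μ hXp R' ν hYp Φ hΦ m A hA hdisj c
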